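/- Any R-module annihilated by some element of S is a strong S-contramodule, i.e., Ext^n_R(S⁻¹R, C) = 0 for all n ≥ 0 whenever there exists r ∈ S with rC = 0. -/

import Mathlib

/-!
Multiplication by `r` is an automorphism of `S⁻¹R`, so by functoriality it induces an automorphism
of `Ext^n_R(S⁻¹R, C)`. Computed on a projective resolution `P`, this endomorphism is induced by
`r • 𝟙` on the complex `Hom(P, C)`, which vanishes because `r` kills `C`. An object carrying an
automorphism equal to zero is zero.
-/

open CategoryTheory Limits

/-- `Ext^n_R(M, N)` for `R`-modules `M`, `N`. -/
noncomputable def extGroup (R : Type) [CommRing R] (M N : Type) [AddCommGroup M] [Module R M]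
    [AddCommGroup N] [Module R N] (n : ℕ) : Type :=
  ((Ext R (ModuleCat R) n).obj (Opposite.op (ModuleCat.of R M))).obj (ModuleCat.of R N)

theorem CategoryTheory.linearYoneda_obj_map_smul_id_eq_zero {R : Type*} [Ring R] {C : Type*}
    [Category* C] [Preadditive C] [Linear R C] {Y : C} {r : R} (hY : r • 𝟙 Y = 0) (X : C) :
    ((linearYoneda R C).obj Y).map (r • 𝟙 X).op = 0 := by
  ext (φ : X ⟶ Y)
  change (r • 𝟙 X) ≫ φ = 0
  rw [Linear.smul_comp, Category.id_comp, ← Category.comp_id φ, ← Linear.comp_smul, hY,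
    comp_zero]

theorem CategoryTheory.Functor.leftDerived_map_smul_id_eq_zero {R : Type*} [Semiring R]
    {C : Type*} [Category* C] [Abelian C] [CategoryTheory.Linear R C] [HasProjectiveResolutions C]
    {D : Type*} [Category* D] [Abelian D] (F : C ⥤ D) [F.Additive] {r : R}
    (hF : ∀ X, F.map (r • 𝟙 X) = 0) (n : ℕ) (X : C) :
    (F.leftDerived n).map (r • 𝟙 X) = 0 := by
  let P := projectiveResolution X
  have hlift : (r • 𝟙 P.complex) ≫ P.π = P.π ≫ (ChainComplex.single₀ C).map (r • 𝟙 X) := by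
    ext
    simp only [HomologicalComplex.comp_f, HomologicalComplex.smul_f_apply, Linear.smul_comp,
      Category.id_comp, ChainComplex.single₀_map_f_zero]
    erw [Linear.comp_smul, Category.comp_id]
  have hkill : (F.mapHomologicalComplex _).map (r • 𝟙 P.complex) = 0 := by
    ext i
    exact hF (P.complex.X i)
  rw [F.leftDerived_map_eq n _ _ hlift, Functor.comp_map, hkill, Functor.map_zero, zero_comp,
    comp_zero]

theorem CategoryTheory.isZero_Ext_of_isIso_smul_id {R : Type*} [Ring R] {C : Type*}
    [Category* C] [Abelian C] [Linear R C] [EnoughProjectives C] {X Y : C} {r : R}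
    [IsIso (r • 𝟙 X)] (hY : r • 𝟙 Y = 0) (n : ℕ) :
    IsZero (((Ext R C n).obj (Opposite.op X)).obj Y) := by
  let F := ((linearYoneda R C).obj Y).rightOp
  have hzero : (F.leftDerived n).map (r • 𝟙 X) = 0 :=
    F.leftDerived_map_smul_id_eq_zero
      (fun Z => congrArg Quiver.Hom.op (linearYoneda_obj_map_smul_id_eq_zero hY Z)) n X
  exact (IsZero.of_mono_eq_zero _ hzero).unop

theorem ModuleCat.isIso_smul_id_of_isUnit {R : Type*} [CommRing R] {M : Type*} [AddCommGroup M]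
    [Module R M] {r : R} (hr : IsUnit (algebraMap R (Module.End R M) r)) :
    IsIso (r • 𝟙 (ModuleCat.of R M)) := by
  rw [ConcreteCategory.isIso_iff_bijective]
  exact (Module.End.isUnit_iff _).mp hr

theorem ModuleCat.smul_id_eq_zero {R : Type*} [CommRing R] {M : Type*} [AddCommGroup M]
    [Module R M] {r : R} (hr : ∀ m : M, r • m = 0) :
    r • 𝟙 (ModuleCat.of R M) = 0 := by
  ext m
  exact hr m

theorem annihilated_is_strong_contramodule
    (R : Type) [CommRing R] (S : Submonoid R)
    (C : Type) [AddCommGroup C] [Module R C]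
    (r : R) (hr : r ∈ S) (hann : ∀ c : C, r • c = 0) :
    ∀ n : ℕ, Subsingleton (extGroup R (Localization S) C n) := by
  intro n
  have : IsIso (r • 𝟙 (ModuleCat.of R (Localization S))) :=
    ModuleCat.isIso_smul_id_of_isUnit
      (IsLocalizedModule.map_units (Algebra.linearMap R (Localization S)) ⟨r, hr⟩)
  exact ModuleCat.subsingleton_of_isZero
    (isZero_Ext_of_isIso_smul_id (ModuleCat.smul_id_eq_zero hann) n)
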